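/- Let (H,R,χ) be a pre-Cartier quasitriangular Hopf algebra and γ = S(χⁱ)χᵢ its Casimir element. Then γ is central in H. -/

import Mathlib

open scoped TensorProduct

noncomputable section

variable (k H : Type*) [CommRing k] [Ring H] [HopfAlgebra k H]

/-- leg embedding `a ⊗ b ↦ a ⊗ b ⊗ 1` into `H ⊗ (H ⊗ H)`. -/
def leg12 : H ⊗[k] H →ₐ[k] H ⊗[k] (H ⊗[k] H) :=
  Algebra.TensorProduct.map (AlgHom.id k H) Algebra.TensorProduct.includeLeft

/-- leg embedding `a ⊗ b ↦ 1 ⊗ a ⊗ b`. -/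
def leg23 : H ⊗[k] H →ₐ[k] H ⊗[k] (H ⊗[k] H) :=
  Algebra.TensorProduct.includeRight

/-- leg embedding `a ⊗ b ↦ a ⊗ 1 ⊗ b`. -/
def leg13 : H ⊗[k] H →ₐ[k] H ⊗[k] (H ⊗[k] H) :=
  Algebra.TensorProduct.map (AlgHom.id k H) Algebra.TensorProduct.includeRight

/-- `(Id ⊗ Δ)` as an algebra map `H ⊗ H → H ⊗ (H ⊗ H)`. -/
def idComul : H ⊗[k] H →ₐ[k] H ⊗[k] (H ⊗[k] H) :=
  Algebra.TensorProduct.map (AlgHom.id k H) (Bialgebra.comulAlgHom k H)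

/-- `(Δ ⊗ Id)` as an algebra map `H ⊗ H → H ⊗ (H ⊗ H)` (after reassociation). -/
def comulId : H ⊗[k] H →ₐ[k] H ⊗[k] (H ⊗[k] H) :=
  (Algebra.TensorProduct.assoc k k k H H H).toAlgHom.comp
    (Algebra.TensorProduct.map (Bialgebra.comulAlgHom k H) (AlgHom.id k H))

/-- the flip `a ⊗ b ↦ b ⊗ a` as an algebra map. -/
def swapT : H ⊗[k] H →ₐ[k] H ⊗[k] H := (Algebra.TensorProduct.comm k H H).toAlgHom

/-- A quasitriangular structure on the bialgebra `H`. -/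
structure QT where
  R : H ⊗[k] H
  Rinv : H ⊗[k] H
  mul_inv : R * Rinv = 1
  inv_mul : Rinv * R = 1
  quasi_cocomm : ∀ h : H, swapT k H (Coalgebra.comul (R := k) h) * R = R * Coalgebra.comul (R := k) h
  hex1 : idComul k H R = leg13 k H R * leg12 k H R
  hex2 : comulId k H R = leg13 k H R * leg23 k H R

/-- A pre-Cartier quasitriangular bialgebra structure on `H`. -/
structure PreCartier extends QT k H where
  χ : H ⊗[k] H
  chi_comm : ∀ h : H, χ * Coalgebra.comul (R := k) h = Coalgebra.comul (R := k) h * χ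
  chi_hex1 : idComul k H χ = leg12 k H χ + leg12 k H Rinv * leg13 k H χ * leg12 k H R
  chi_hex2 : comulId k H χ = leg23 k H χ + leg23 k H Rinv * leg13 k H χ * leg23 k H R

/-! With `γ = S(χⁱ)χᵢ` and `Δ h = h₁ ⊗ h₂`, the map `x ⊗ y ↦ S(x) y` sends `χ Δ(h)` to `S(h₁) γ h₂`
and, by the antipode axiom, `Δ(h) χ` to `ε(h) γ`. So `χ Δ(h) = Δ(h) χ` makes `γ` invariant under the
right adjoint action, and invariant elements are central by coassociativity:
`h γ = h₁ ε(h₂) γ = h₁ S(h₂) γ h₃ = ε(h₁) γ h₂ = γ h`. -/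

section AdjointAction

open Coalgebra HopfAlgebra TensorProduct

variable {R A : Type*} [CommSemiring R]

theorem Coalgebra.sum_counit_right_smul [AddCommMonoid A] [Module R A] [Coalgebra R A] {a : A}
    {ι : Type*} (r : Repr R a ι) : ∑ i ∈ r.index, counit (R := R) (r.right i) • r.left i = a := by
  simpa only [map_sum, _root_.TensorProduct.rid_tmul, one_smul]
    using congrArg (_root_.TensorProduct.rid R A) (sum_tmul_counit_eq r)

variable [Semiring A] [HopfAlgebra R A]

variable (R) in
def antipodeMul : A ⊗[R] A →ₗ[R] A :=
  LinearMap.mul' R A ∘ₗ map (antipode R) LinearMap.id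

variable (R) in
def antipodeSandwich (c : A) : A ⊗[R] A →ₗ[R] A :=
  LinearMap.mul' R A ∘ₗ map (LinearMap.mulRight R c ∘ₗ antipode R) LinearMap.id

variable (R) in
def rightAdjointAction (c : A) : A →ₗ[R] A :=
  antipodeSandwich R c ∘ₗ comul

@[simp]
theorem antipodeMul_tmul (x y : A) : antipodeMul R (x ⊗ₜ y) = antipode R x * y := by
  simp [antipodeMul]

@[simp]
theorem antipodeSandwich_tmul (c x y : A) :
    antipodeSandwich R c (x ⊗ₜ y) = antipode R x * c * y := by
  simp [antipodeSandwich]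

theorem rightAdjointAction_eq_sum (c : A) {a : A} {ι : Type*} (r : Repr R a ι) :
    rightAdjointAction R c a = ∑ i ∈ r.index, antipode R (r.left i) * c * r.right i := by
  simp [rightAdjointAction, ← r.eq, map_sum]

theorem antipodeMul_mul (u t : A ⊗[R] A) :
    antipodeMul R (u * t) = antipodeSandwich R (antipodeMul R u) t := by
  induction t using TensorProduct.induction_on with
  | zero => simp
  | add t t' ht ht' => simp only [mul_add, map_add, ht, ht']
  | tmul x y =>
    induction u using TensorProduct.induction_on with
    | zero => simp
    | add u u' hu hu' => simp only [add_mul, map_add, hu, hu', antipodeSandwich_tmul, mul_add]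
    | tmul a b =>
      simp [Algebra.TensorProduct.tmul_mul_tmul, antipode_mul_antidistrib, mul_assoc]

theorem antipodeMul_comul (a : A) :
    antipodeMul R (comul a) = algebraMap R A (counit (R := R) a) := by
  simpa [antipodeMul, LinearMap.rTensor] using mul_antipode_rTensor_comul_apply (R := R) a

theorem antipodeMul_comul_mul (a : A) (t : A ⊗[R] A) :
    antipodeMul R (comul a * t) = counit (R := R) a • antipodeMul R t := by
  induction t using TensorProduct.induction_on with
  | zero => simp
  | add t t' ht ht' => simp only [mul_add, map_add, ht, ht', smul_add]
  | tmul x y =>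
    rw [antipodeMul_mul, antipodeMul_comul, antipodeSandwich_tmul, antipodeMul_tmul,
      mul_assoc, ← Algebra.smul_def, mul_smul_comm]

theorem rightAdjointAction_antipodeMul_of_commute {χ : A ⊗[R] A}
    (hχ : ∀ a : A, χ * comul (R := R) a = comul (R := R) a * χ) (a : A) :
    rightAdjointAction R (antipodeMul R χ) a = counit (R := R) a • antipodeMul R χ := by
  rw [rightAdjointAction, LinearMap.comp_apply, ← antipodeMul_mul, hχ, antipodeMul_comul_mul]

theorem sum_mul_rightAdjointAction (c : A) {a : A} {ι : Type*} (r : Repr R a ι) :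
    ∑ i ∈ r.index, r.left i * rightAdjointAction R c (r.right i) = c * a := by
  let r₁ := fun i ↦ ℛ R (r.left i)
  let r₂ := fun i ↦ ℛ R (r.right i)
  have coassoc := congrArg (LinearMap.mul' R A ∘ₗ LinearMap.lTensor A (antipodeSandwich R c))
    (sum_tmul_tmul_eq r r₁ r₂)
  simp only [map_sum, LinearMap.comp_apply, LinearMap.lTensor_tmul, LinearMap.mul'_apply,
    antipodeSandwich_tmul] at coassoc
  calc ∑ i ∈ r.index, r.left i * rightAdjointAction R c (r.right i)
      = ∑ i ∈ r.index, ∑ j ∈ (r₂ i).index,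
          r.left i * (antipode R ((r₂ i).left j) * c * (r₂ i).right j) := by
        simp only [rightAdjointAction_eq_sum c (r₂ _), Finset.mul_sum]
    _ = ∑ i ∈ r.index, ∑ j ∈ (r₁ i).index,
          (r₁ i).left j * (antipode R ((r₁ i).right j) * c * r.right i) := coassoc.symm
    _ = ∑ i ∈ r.index, counit (R := R) (r.left i) • (c * r.right i) := by
        simp only [← mul_assoc, ← Finset.sum_mul, sum_mul_antipode_eq_smul, smul_mul_assoc,
          one_mul]
    _ = c * a := by
        simp only [← mul_smul_comm, ← Finset.mul_sum, sum_counit_smul]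

theorem commute_of_rightAdjointAction_eq_counit_smul {c : A}
    (hc : ∀ a : A, rightAdjointAction R c a = counit (R := R) a • c) (a : A) : c * a = a * c := by
  calc c * a = ∑ i ∈ (ℛ R a).index, (ℛ R a).left i * rightAdjointAction R c ((ℛ R a).right i) :=
        (sum_mul_rightAdjointAction c (ℛ R a)).symm
    _ = a * c := by
        simp only [hc, mul_smul_comm, ← smul_mul_assoc, ← Finset.sum_mul, sum_counit_right_smul]

end AdjointAction

/-- the Casimir element `γ = S(χⁱ)χᵢ` of a pre-Cartier quasitriangular Hopf
algebra is central in `H`. -/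
theorem casimir_central (P : PreCartier k H) :
    let γ : H := LinearMap.mul' k H
      (TensorProduct.map (HopfAlgebra.antipode k : H →ₗ[k] H) LinearMap.id P.χ)
    ∀ h : H, γ * h = h * γ :=
  commute_of_rightAdjointAction_eq_counit_smul
    (rightAdjointAction_antipodeMul_of_commute P.chi_comm)

end
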